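/- arXiv:2311.00222 — 2 statements merged into one kernel-verified Lean document; each statement's English description precedes it below -/
import Mathlib

section
/- Suppose n ≥ 2 and for each task q there is a unique dominating agent i* q, i.e., f (i* q) q > f j q for every agent j ≠ i* q. Then the weight game has exactly one Nash equilibrium, namely the matrix Ŵ with Ŵ i q = 1 if i = i* q and Ŵ i q = 0 otherwise. -/
open Finset Filter

noncomputable def fsMax (s : Finset ℝ) : ℝ := s.max.unbotD 0

noncomputable def fsMin (s : Finset ℝ) : ℝ := s.min.untopD 0

noncomputable def fsSubmax (s : Finset ℝ) : ℝ := fsMax (s.filter (fun x => x < fsMax s))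

/-- Agent `i` is dominating for task `q`. -/
def Dominating {n m : ℕ} (f : Fin n → Fin m → ℝ) (i : Fin n) (q : Fin m) : Prop :=
  ∀ j, f j q ≤ f i q

/-- Maximum of `g j` over all `j ≠ i` (0 if that set is empty). -/
noncomputable def maxErase {n : ℕ} (i : Fin n) (g : Fin n → ℝ) : ℝ :=
  fsMax ((Finset.univ.erase i).image g)

/-- Utility of agent `i` in the weight game. -/
noncomputable def Uutil {n m : ℕ} (f : Fin n → Fin m → ℝ) (w : Fin n → Fin m → ℝ)
    (i : Fin n) : ℝ :=
  ∑ q, (f i q * w i q - maxErase i (fun j => f j q * w j q) * w i q)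

/-- All entries of the matrix lie in `[0,1]`. -/
def InUnit {n m : ℕ} (w : Fin n → Fin m → ℝ) : Prop :=
  ∀ i q, w i q ∈ Set.Icc (0 : ℝ) 1

/-- Nash equilibrium of the weight game. -/
def IsNashW {n m : ℕ} (f : Fin n → Fin m → ℝ) (w : Fin n → Fin m → ℝ) : Prop :=
  ∀ i, ∀ w' : Fin m → ℝ, (∀ q, w' q ∈ Set.Icc (0 : ℝ) 1) →
    Uutil f (Function.update w i w') i ≤ Uutil f w i

/-! The utility of agent `i` is linear in its own weights, with coefficient
`f i q - maxErase i (f · q * w · q)` on task `q`, and that coefficient does not depend on the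
weights of `i`. So a Nash equilibrium is exactly a profile where every agent puts weight `1` on
tasks with positive coefficient and `0` on tasks with negative coefficient. With a unique
dominating agent `i* q`, the coefficient of `i* q` is positive whatever the others do, forcing
`w (i* q) q = 1`; then every other agent faces a competitor worth `f (i* q) q`, more than its own
reward, so its coefficient is negative. -/

lemma forall_sum_mul_le_iff {ι : Type*} [Fintype ι] [DecidableEq ι] {S : Set ℝ}
    {c v : ι → ℝ} (hv : ∀ q, v q ∈ S) :
    (∀ x : ι → ℝ, (∀ q, x q ∈ S) → ∑ q, c q * x q ≤ ∑ q, c q * v q) ↔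
      ∀ q, ∀ t ∈ S, c q * t ≤ c q * v q := by
  constructor
  · intro h q t ht
    have hx : ∀ q', Function.update v q t q' ∈ S := by
      intro q'
      rcases eq_or_ne q' q with rfl | hq'
      · simpa using ht
      · simpa [Function.update_of_ne hq'] using hv q'
    have hdiff : ∑ q', c q' * Function.update v q t q' - ∑ q', c q' * v q'
        = c q * (t - v q) := by
      rw [← Finset.sum_sub_distrib, Finset.sum_eq_single q]
      · simp only [Function.update_self]; ring
      · intro q' _ hq'
        simp [Function.update_of_ne hq']
      · simp
    linarith [h _ hx]
  · intro h x hx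
    exact Finset.sum_le_sum fun q _ => h q (x q) (hx q)

section maxErase

variable {n : ℕ}

lemma univ_erase_nonempty (hn : 2 ≤ n) (i : Fin n) :
    ((univ : Finset (Fin n)).erase i).Nonempty :=
  Finset.Nontrivial.erase_nonempty <|
    Finset.univ_nontrivial_iff.2 (Fin.nontrivial_iff_two_le.2 hn)

lemma maxErase_eq_sup' {i : Fin n} (h : ((univ : Finset (Fin n)).erase i).Nonempty)
    (g : Fin n → ℝ) : maxErase i g = (univ.erase i).sup' h g := by
  have h' : ((univ.erase i).image g).Nonempty := h.image g
  rw [maxErase, fsMax, ← Finset.coe_max' h', WithBot.unbotD_coe, Finset.max'_eq_sup',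
    Finset.sup'_image]
  rfl

lemma le_maxErase {i j : Fin n} (hj : j ≠ i) (g : Fin n → ℝ) : g j ≤ maxErase i g := by
  have hmem : j ∈ (univ : Finset (Fin n)).erase i := Finset.mem_erase.2 ⟨hj, mem_univ j⟩
  rw [maxErase_eq_sup' ⟨j, hmem⟩]
  exact Finset.le_sup' g hmem

lemma maxErase_le (hn : 2 ≤ n) {i : Fin n} {g : Fin n → ℝ} {a : ℝ}
    (h : ∀ j, j ≠ i → g j ≤ a) : maxErase i g ≤ a := by
  rw [maxErase_eq_sup' (univ_erase_nonempty hn i)]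
  exact Finset.sup'_le _ _ fun j hj => h j (Finset.ne_of_mem_erase hj)

lemma maxErase_lt (hn : 2 ≤ n) {i : Fin n} {g : Fin n → ℝ} {a : ℝ}
    (h : ∀ j, j ≠ i → g j < a) : maxErase i g < a := by
  rw [maxErase_eq_sup' (univ_erase_nonempty hn i), Finset.sup'_lt_iff]
  exact fun j hj => h j (Finset.ne_of_mem_erase hj)

lemma maxErase_congr {i : Fin n} {g g' : Fin n → ℝ} (h : ∀ j, j ≠ i → g j = g' j) :
    maxErase i g = maxErase i g' := by
  unfold maxErase
  rw [Finset.image_congr fun j hj => h j (Finset.ne_of_mem_erase hj)]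

end maxErase

section WeightGame

variable {n m : ℕ} {f w : Fin n → Fin m → ℝ}

noncomputable def marginalGain (f w : Fin n → Fin m → ℝ) (i : Fin n) (q : Fin m) : ℝ :=
  f i q - maxErase i (fun j => f j q * w j q)

lemma Uutil_update (f w : Fin n → Fin m → ℝ) (i : Fin n) (w' : Fin m → ℝ) :
    Uutil f (Function.update w i w') i = ∑ q, marginalGain f w i q * w' q := by
  refine Finset.sum_congr rfl fun q _ => ?_
  have hM : maxErase i (fun j => f j q * Function.update w i w' j q)
      = maxErase i (fun j => f j q * w j q) :=
    maxErase_congr fun j hj => by rw [Function.update_of_ne hj]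
  rw [hM, Function.update_self, marginalGain]
  ring

lemma Uutil_eq_sum (f w : Fin n → Fin m → ℝ) (i : Fin n) :
    Uutil f w i = ∑ q, marginalGain f w i q * w i q := by
  simpa using Uutil_update f w i (w i)

lemma isNashW_iff (hw : InUnit w) :
    IsNashW f w ↔ ∀ i q, ∀ t ∈ Set.Icc (0 : ℝ) 1,
      marginalGain f w i q * t ≤ marginalGain f w i q * w i q := by
  simp only [IsNashW, Uutil_update]
  simp only [Uutil_eq_sum]
  exact forall_congr' fun i => forall_sum_mul_le_iff (hw i)

lemma eq_one_of_isNashW (hw : InUnit w) (hN : IsNashW f w) {i : Fin n} {q : Fin m}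
    (hpos : 0 < marginalGain f w i q) : w i q = 1 := by
  have h := (isNashW_iff hw).1 hN i q 1 ⟨zero_le_one, le_rfl⟩
  exact le_antisymm (hw i q).2 (le_of_mul_le_mul_left (by simpa using h) hpos)

lemma eq_zero_of_isNashW (hw : InUnit w) (hN : IsNashW f w) {i : Fin n} {q : Fin m}
    (hneg : marginalGain f w i q < 0) : w i q = 0 := by
  have h := (isNashW_iff hw).1 hN i q 0 ⟨le_rfl, zero_le_one⟩
  rw [mul_zero] at h
  exact le_antisymm (nonpos_of_mul_nonneg_right h hneg) (hw i q).1

def assignment (istar : Fin m → Fin n) : Fin n → Fin m → ℝ :=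
  fun i q => if i = istar q then 1 else 0

variable {istar : Fin m → Fin n}

lemma inUnit_assignment : InUnit (assignment istar) := by
  intro i q
  by_cases h : i = istar q <;> simp [assignment, h]

lemma isNashW_assignment (hn : 2 ≤ n) (hf : ∀ i q, 0 ≤ f i q)
    (hdom : ∀ q, Dominating f (istar q) q) : IsNashW f (assignment istar) := by
  refine (isNashW_iff inUnit_assignment).2 fun i q t ht => ?_
  by_cases h : i = istar q
  · subst h
    have hgain : 0 ≤ marginalGain f (assignment istar) (istar q) q :=
      sub_nonneg.2 <| maxErase_le hn fun j hj => by simp [assignment, hj, hf]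
    simpa [assignment] using mul_le_mul_of_nonneg_left ht.2 hgain
  · have hgain : marginalGain f (assignment istar) i q ≤ 0 := by
      refine sub_nonpos.2 ((hdom q i).trans ?_)
      simpa [assignment] using le_maxErase (Ne.symm h) (fun j => f j q * assignment istar j q)
    simpa [assignment, h] using mul_nonpos_of_nonpos_of_nonneg hgain ht.1

lemma eq_assignment_of_isNashW (hn : 2 ≤ n) (hf : ∀ i q, 0 ≤ f i q)
    (hstar : ∀ q, ∀ j, j ≠ istar q → f j q < f (istar q) q)
    (hw : InUnit w) (hN : IsNashW f w) : w = assignment istar := by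
  have hwinner : ∀ q, w (istar q) q = 1 := fun q =>
    eq_one_of_isNashW hw hN <| sub_pos.2 <| maxErase_lt hn fun j hj =>
      (mul_le_of_le_one_right (hf j q) (hw j q).2).trans_lt (hstar q j hj)
  funext i q
  by_cases h : i = istar q
  · simp [assignment, h, hwinner]
  · have hloser : marginalGain f w i q < 0 := by
      refine sub_neg.2 ((hstar q i h).trans_le ?_)
      simpa [hwinner] using le_maxErase (Ne.symm h) (fun j => f j q * w j q)
    simp [assignment, h, eq_zero_of_isNashW hw hN hloser]

end WeightGame

theorem nash_weight_game_unique {n m : ℕ} (hn : 2 ≤ n) (f : Fin n → Fin m → ℝ)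
    (hf : ∀ i q, 0 ≤ f i q)
    (istar : Fin m → Fin n)
    (hstar : ∀ q, ∀ j, j ≠ istar q → f j q < f (istar q) q) :
    (InUnit (fun i q => if i = istar q then (1 : ℝ) else 0) ∧
      IsNashW f (fun i q => if i = istar q then (1 : ℝ) else 0)) ∧
      ∀ w : Fin n → Fin m → ℝ, InUnit w → IsNashW f w →
        w = fun i q => if i = istar q then (1 : ℝ) else 0 := by
  have hdom : ∀ q, Dominating f (istar q) q := fun q j => by
    rcases eq_or_ne j (istar q) with rfl | hj
    · exact le_rfl
    · exact (hstar q j hj).le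
  exact ⟨⟨inUnit_assignment, isNashW_assignment hn hf hdom⟩,
    fun w hw hN => eq_assignment_of_isNashW hn hf hstar hw hN⟩
end

section
/- Let E be a directed graph on Fin n with diameter bound d ≥ 1, let v : Fin n → ℝ, and let M : ℕ → Fin n → ℝ satisfy M 0 i = v i and M (t+1) i = max_{j ∈ N̄ i} M t j for all t and i. Then for all t ≥ d and all nodes i, M t i = max_j v j. -/
open Finset Filter

open Classical in
/-- Closed in-neighborhood of node `i`. -/
noncomputable def nbhd {n : ℕ} (E : Fin n → Fin n → Prop) (i : Fin n) : Finset (Fin n) :=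
  insert i (Finset.univ.filter (fun j => E j i))

/-- `d` is a diameter bound for the directed graph `E`. -/
def IsDiamBound {n : ℕ} (E : Fin n → Fin n → Prop) (d : ℕ) : Prop :=
  ∀ j i : Fin n, ∃ p ≤ d, ∃ c : ℕ → Fin n,
    c 0 = j ∧ c p = i ∧ ∀ k < p, E (c k) (c (k + 1))

/-! The maximum propagates one edge per round and never grows, so after `d` rounds the initial
maximum has reached every node along a walk of length at most `d`, while no node exceeds it. -/

lemma fsMax_eq_max' {s : Finset ℝ} (h : s.Nonempty) : fsMax s = s.max' h := by
  rw [fsMax, ← Finset.coe_max' h]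
  rfl

lemma le_fsMax {s : Finset ℝ} {x : ℝ} (hx : x ∈ s) : x ≤ fsMax s := by
  rw [fsMax_eq_max' ⟨x, hx⟩]
  exact s.le_max' x hx

lemma fsMax_mem {s : Finset ℝ} (h : s.Nonempty) : fsMax s ∈ s := by
  rw [fsMax_eq_max' h]
  exact s.max'_mem h

lemma fsMax_le {s : Finset ℝ} {a : ℝ} (h : s.Nonempty) (hs : ∀ x ∈ s, x ≤ a) : fsMax s ≤ a := by
  rw [fsMax_eq_max' h]
  exact s.max'_le h a hs

lemma self_mem_nbhd {n : ℕ} (E : Fin n → Fin n → Prop) (i : Fin n) : i ∈ nbhd E i := by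
  simp [nbhd]

lemma mem_nbhd_of_adj {n : ℕ} {E : Fin n → Fin n → Prop} {j i : Fin n} (h : E j i) :
    j ∈ nbhd E i := by
  simp [nbhd, h]

namespace MaxConsensus

variable {n : ℕ} {E : Fin n → Fin n → Prop} {M : ℕ → Fin n → ℝ}
  (hMs : ∀ t i, M (t + 1) i = fsMax ((nbhd E i).image (M t)))
include hMs

lemma le_succ_of_mem_nbhd {t : ℕ} {i j : Fin n} (hj : j ∈ nbhd E i) : M t j ≤ M (t + 1) i := by
  rw [hMs]
  exact le_fsMax (mem_image_of_mem _ hj)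

lemma monotone_apply (i : Fin n) : Monotone (M · i) :=
  monotone_nat_of_le_succ fun _ => le_succ_of_mem_nbhd hMs (self_mem_nbhd E i)

lemma le_apply_of_walk {c : ℕ → Fin n} {p : ℕ} (hc : ∀ k < p, E (c k) (c (k + 1))) :
    M 0 (c 0) ≤ M p (c p) := by
  induction p with
  | zero => rfl
  | succ p ih =>
    exact (ih fun k hk => hc k (by omega)).trans
      (le_succ_of_mem_nbhd hMs (mem_nbhd_of_adj (hc p p.lt_succ_self)))

lemma apply_le_of_forall_le {a : ℝ} (h0 : ∀ j, M 0 j ≤ a) (t : ℕ) (i : Fin n) : M t i ≤ a := by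
  induction t generalizing i with
  | zero => exact h0 i
  | succ t ih =>
    rw [hMs]
    refine fsMax_le ⟨M t i, mem_image_of_mem _ (self_mem_nbhd E i)⟩ ?_
    simpa using fun j _ => ih j

end MaxConsensus

theorem max_consensus_general {n : ℕ} (E : Fin n → Fin n → Prop)
    (d : ℕ) (hdiam : IsDiamBound E d)
    (v : Fin n → ℝ) (M : ℕ → Fin n → ℝ)
    (hM0 : ∀ i, M 0 i = v i)
    (hMs : ∀ t i, M (t + 1) i = fsMax ((nbhd E i).image (M t))) :
    ∀ t, d ≤ t → ∀ i, M t i = fsMax (Finset.univ.image v) := by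
  intro t ht i
  have hv_le : ∀ j, M 0 j ≤ fsMax (univ.image v) := fun j =>
    hM0 j ▸ le_fsMax (mem_image_of_mem v (mem_univ j))
  obtain ⟨j, -, hj⟩ := mem_image.mp (fsMax_mem (univ_nonempty_iff.mpr ⟨i⟩ |>.image v))
  obtain ⟨p, hpd, c, rfl, rfl, hc⟩ := hdiam j i
  refine le_antisymm (MaxConsensus.apply_le_of_forall_le hMs hv_le t (c p)) ?_
  calc fsMax (univ.image v) = M 0 (c 0) := by rw [hM0, hj]
    _ ≤ M p (c p) := MaxConsensus.le_apply_of_walk hMs hc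
    _ ≤ M t (c p) := MaxConsensus.monotone_apply hMs (c p) (hpd.trans ht)

theorem max_consensus {n : ℕ} (hn : 1 ≤ n) (E : Fin n → Fin n → Prop)
    (d : ℕ) (hd : 1 ≤ d) (hdiam : IsDiamBound E d)
    (v : Fin n → ℝ) (M : ℕ → Fin n → ℝ)
    (hM0 : ∀ i, M 0 i = v i)
    (hMs : ∀ t i, M (t + 1) i = fsMax ((nbhd E i).image (M t))) :
    ∀ t, d ≤ t → ∀ i, M t i = fsMax (Finset.univ.image v) :=
  max_consensus_general E d hdiam v M hM0 hMs
end
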